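/- Let θ ∈ (0, π/2], φ = arctan(1/sin θ), ψ₁ = π/2 − φ, ψ₂ = π/2 + φ, p_max = 1/2 + √(1 + sin²θ)/4, let ε > 0, let n, r be natural numbers with 0 < r ≤ n, and let ε'_A ∈ [0, 1/2]. Define p'' = 1/2 + (1/8) sin θ (sin ψ₁ + sin ψ₂) + (1/4) √(1/4 − ε'_A²) (cos ψ₁ − cos ψ₂) + (1/4) ε'_A cos θ (cos ψ₁ + cos ψ₂). If the averaged success probability ((n − r)·p_max + r·p'')/n is at least p_max − ε·p_max, then ε'_A ≤ √(2 n ε p_max / (r cos ψ₁)). -/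

import Mathlib

/-!
Since `arctan (1 / t) = π / 2 - arctan t` for `t = sin θ > 0`, the optimal angles are
`ψ₁ = arctan t` and `ψ₂ = π - ψ₁`. In these terms `p_max = 1/2 + (t sin ψ₁ + cos ψ₁) / 4` and
`p'' = 1/2 + (t sin ψ₁ + 2 √(1/4 - ε'_A²) cos ψ₁) / 4`, so the bias costs
`p_max - p'' = (1 - 2 √(1/4 - ε'_A²)) cos ψ₁ / 4 ≥ ε'_A² cos ψ₁ / 2`.
The averaged success rate forces `r (p_max - p'') ≤ n ε p_max`, which gives the bound.
-/

open Real

lemma half_pi_sub_arctan_one_div {t : ℝ} (ht : 0 < t) : π / 2 - arctan (1 / t) = arctan t := by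
  rw [one_div, arctan_inv_of_pos ht]
  ring

lemma mul_sin_arctan_add_cos_arctan (t : ℝ) :
    t * sin (arctan t) + cos (arctan t) = √(1 + t ^ 2) := by
  have hs : 0 < √(1 + t ^ 2) := sqrt_pos.mpr (by positivity)
  rw [sin_arctan, cos_arctan]
  field_simp
  rw [sq_sqrt (by positivity)]
  ring

lemma sqrt_quarter_sub_sq_le {a : ℝ} (ha : a ^ 2 ≤ 1 / 2) : √(1 / 4 - a ^ 2) ≤ 1 / 2 - a ^ 2 :=
  (sqrt_le_left (by linarith)).2 (by nlinarith [sq_nonneg (a ^ 2)])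

lemma mul_sub_le_of_average_ge {n r p q ε : ℝ} (hn : 0 < n)
    (h : ((n - r) * p + r * q) / n ≥ p - ε * p) : r * (p - q) ≤ n * ε * p := by
  rw [ge_iff_le, le_div_iff₀ hn] at h
  linarith

theorem stmt_8 (θ : ℝ) (hθ : θ ∈ Set.Ioc 0 (Real.pi / 2))
    (φ ψ₁ ψ₂ pmax : ℝ)
    (hφ : φ = Real.arctan (1 / Real.sin θ))
    (hψ₁ : ψ₁ = Real.pi / 2 - φ) (hψ₂ : ψ₂ = Real.pi / 2 + φ)
    (hpmax : pmax = 1 / 2 + Real.sqrt (1 + Real.sin θ ^ 2) / 4)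
    (ε : ℝ) (n r : ℕ) (hr : 0 < r) (hrn : r ≤ n)
    (εA' : ℝ) (hεA' : εA' ∈ Set.Icc (0 : ℝ) (1 / 2))
    (p'' : ℝ)
    (hp'' : p'' = 1 / 2 + (1 / 8) * Real.sin θ * (Real.sin ψ₁ + Real.sin ψ₂)
        + (1 / 4) * Real.sqrt (1 / 4 - εA' ^ 2) * (Real.cos ψ₁ - Real.cos ψ₂)
        + (1 / 4) * εA' * Real.cos θ * (Real.cos ψ₁ + Real.cos ψ₂))
    (h : ((n - r : ℝ) * pmax + r * p'') / n ≥ pmax - ε * pmax) :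
    εA' ≤ Real.sqrt (2 * n * ε * pmax / (r * Real.cos ψ₁)) := by
  obtain ⟨hθ0, hθ2⟩ := hθ
  have ht : 0 < sin θ := sin_pos_of_pos_of_lt_pi hθ0 (by linarith [pi_pos])
  have hψ₁' : ψ₁ = arctan (sin θ) := by rw [hψ₁, hφ, half_pi_sub_arctan_one_div ht]
  have hψ₂' : ψ₂ = π - ψ₁ := by rw [hψ₂, hψ₁]; ring
  have hcos : 0 < cos ψ₁ := hψ₁' ▸ cos_arctan_pos _
  have hpmax' : pmax = 1 / 2 + (sin θ * sin ψ₁ + cos ψ₁) / 4 := by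
    rw [hpmax, hψ₁', mul_sin_arctan_add_cos_arctan]
  have hp''' : p'' = 1 / 2 + (sin θ * sin ψ₁ + 2 * √(1 / 4 - εA' ^ 2) * cos ψ₁) / 4 := by
    rw [hp'', hψ₂', sin_pi_sub, cos_pi_sub]
    ring
  have hq := sqrt_quarter_sub_sq_le (a := εA') (by nlinarith [hεA'.1, hεA'.2])
  have hgap : εA' ^ 2 * cos ψ₁ / 2 ≤ pmax - p'' := by
    rw [hpmax', hp''']
    nlinarith
  have hn : (0 : ℝ) < n := by exact_mod_cast hr.trans_le hrn
  have hbound := mul_sub_le_of_average_ge hn h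
  refine (le_abs_self _).trans (abs_le_sqrt ?_)
  rw [le_div_iff₀ (by positivity)]
  nlinarith [mul_le_mul_of_nonneg_left hgap (Nat.cast_nonneg r : (0 : ℝ) ≤ r)]
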